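/- arXiv:2307.09934 — 3 statements merged into one kernel-verified Lean document; each statement's English description precedes it below -/
import Mathlib

section
/- For the self-adaptive SIS model on the cycle, with R = β/γ > 2, the equilibrium x₂* = (1 + √(1 - 2/R))/2 satisfies f'(x₂*) < 0 and the equilibrium x₁* = (1 - √(1 - 2/R))/2 satisfies f'(x₁*) > 0, where f(x) = -2βx³ + 2βx² - γx; hence x₂* is stable and x₁* is unstable. -/
/-!
Writing `f x = -x * q x` with `q x = 2βx² - 2βx + γ`, the two equilibria `(1 ± s)/2`,
`s = √(1 - 2/R) ∈ (0, 1)`, are the roots of `q`, where the product rule leaves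
`f' x = -x * q' x = -2βx(2x - 1)`. Hence `f'((1 + s)/2) = -βs(1 + s) < 0` and
`f'((1 - s)/2) = βs(1 - s) > 0`.
-/

def sisCycleRHS (β γ : ℝ) : ℝ → ℝ := fun x => -2 * β * x ^ 3 + 2 * β * x ^ 2 - γ * x

theorem hasDerivAt_sisCycleRHS (β γ x : ℝ) :
    HasDerivAt (sisCycleRHS β γ) (-6 * β * x ^ 2 + 4 * β * x - γ) x := by
  have h := (((hasDerivAt_pow 3 x).const_mul (-2 * β)).add
    ((hasDerivAt_pow 2 x).const_mul (2 * β))).sub ((hasDerivAt_id x).const_mul γ)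
  exact h.congr_deriv (by ring)

theorem deriv_sisCycleRHS_of_sq_eq {β γ s : ℝ} (hβ : β ≠ 0) (hs : s ^ 2 = 1 - 2 * γ / β) :
    deriv (sisCycleRHS β γ) ((1 + s) / 2) = -β * s * (1 + s) := by
  have hβs : β * s ^ 2 = β - 2 * γ := by rw [hs]; field_simp
  rw [(hasDerivAt_sisCycleRHS β γ _).deriv]
  linear_combination (-1 / 2 : ℝ) * hβs

/-- For the self-adaptive SIS model on the cycle with `R = β/γ > 2`, the
equilibrium `x₂* = (1+√(1-2/R))/2` is stable (`f'(x₂*) < 0`) and the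
equilibrium `x₁* = (1-√(1-2/R))/2` is unstable (`f'(x₁*) > 0`). -/
theorem cycle_ASIS_stability (β γ : ℝ) (hβ : 0 < β) (hγ : 0 < γ)
    (hR : β / γ > 2) :
    let R : ℝ := β / γ
    let f : ℝ → ℝ := fun x => -2 * β * x ^ 3 + 2 * β * x ^ 2 - γ * x
    deriv f ((1 + Real.sqrt (1 - 2 / R)) / 2) < 0 ∧
      deriv f ((1 - Real.sqrt (1 - 2 / R)) / 2) > 0 := by
  intro R f
  have h2γ : 2 * γ < β := by rw [gt_iff_lt, lt_div_iff₀ hγ] at hR; linarith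
  have ht0 : 0 < 1 - 2 * γ / β := by rw [sub_pos, div_lt_one hβ]; exact h2γ
  have ht1 : 1 - 2 * γ / β < 1 := sub_lt_self 1 (by positivity)
  rw [show (2 : ℝ) / R = 2 * γ / β from div_div_eq_mul_div 2 β γ]
  set s := Real.sqrt (1 - 2 * γ / β)
  have hs0 : 0 < s := Real.sqrt_pos.2 ht0
  have hs1 : s < 1 := (Real.sqrt_lt' one_pos).2 (by rwa [one_pow])
  have hs2 : s ^ 2 = 1 - 2 * γ / β := Real.sq_sqrt ht0.le
  have hs2' : (-s) ^ 2 = 1 - 2 * γ / β := by rw [neg_sq, hs2]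
  change deriv (sisCycleRHS β γ) _ < 0 ∧ deriv (sisCycleRHS β γ) _ > 0
  rw [sub_eq_add_neg, deriv_sisCycleRHS_of_sq_eq hβ.ne' hs2, deriv_sisCycleRHS_of_sq_eq hβ.ne' hs2']
  constructor <;> nlinarith [mul_pos hβ hs0]
end

section
/- For the self-adaptive SIS model on the star graph S_n (n ≥ 4), any equilibrium with 0 < x < 1 and 0 < x₁ < 1 satisfies x₁ = (γ/(β(n-2)))·((n-3)x + 1)/(1 - x); consequently, from x₁ < 1 one deduces x < ((n-2)R - 1)/((n-2)R + (n-3)) < 1, where R = β/γ > 1/(n-2). -/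
/-!
Write `R = β / γ`. Since `y ≠ 0`, the edge equation reads `R (n-2) (1-y) x₁ = 1`; adding it, times
`1 - x`, to `n - 2` times the leaf equation eliminates `y` and leaves
`R (n-2) (1-x) x₁ = (n-3) x + 1`, which is the formula for `x₁`. The right-hand side is positive,
so `R (n-2) > 0`, and `x₁ < 1` turns the relation into `(n-3) x + 1 < R (n-2) (1-x)`, which is
linear in `x`.
-/

namespace StarASIS

variable {n R x x₁ y : ℝ}

theorem center_mul_edge_eq_one (hy : y ≠ 0) (e3 : R * (n - 2) * (1 - y) * x₁ * y = y) :
    R * (n - 2) * (1 - y) * x₁ = 1 :=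
  mul_right_cancel₀ hy (by rw [e3, one_mul])

theorem center_leaf_relation (e2 : R * (1 - x) * y * x₁ = x)
    (h : R * (n - 2) * (1 - y) * x₁ = 1) :
    R * (n - 2) * (1 - x) * x₁ = (n - 3) * x + 1 := by
  linear_combination (n - 2) * e2 + (1 - x) * h

theorem leaf_affine_pos (hn : 3 ≤ n) (hx : 0 ≤ x) : 0 < (n - 3) * x + 1 := by
  have := mul_nonneg (sub_nonneg.2 hn) hx
  linarith

theorem center_eq (hx : x ≠ 1) (hc : (n - 3) * x + 1 ≠ 0)
    (h : R * (n - 2) * (1 - x) * x₁ = (n - 3) * x + 1) :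
    x₁ = R⁻¹ / (n - 2) * (((n - 3) * x + 1) / (1 - x)) := by
  have hRn : R * (n - 2) ≠ 0 := left_ne_zero_of_mul (left_ne_zero_of_mul (h ▸ hc))
  have hR : R ≠ 0 := left_ne_zero_of_mul hRn
  have hn : n - 2 ≠ 0 := right_ne_zero_of_mul hRn
  have hx' : 1 - x ≠ 0 := sub_ne_zero.2 hx.symm
  field_simp
  linear_combination h

theorem mul_sub_two_pos (hn : 3 ≤ n) (hx0 : 0 ≤ x) (hx1 : x < 1) (hx₁0 : 0 < x₁)
    (h : R * (n - 2) * (1 - x) * x₁ = (n - 3) * x + 1) : 0 < R * (n - 2) :=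
  pos_of_mul_pos_left (pos_of_mul_pos_left (h ▸ leaf_affine_pos hn hx0) hx₁0.le)
    (sub_nonneg.2 hx1.le)

theorem leaf_lt_of_center_lt_one (hRn : 0 < R * (n - 2)) (hn : 3 ≤ n) (hx1 : x < 1)
    (hx₁1 : x₁ < 1) (h : R * (n - 2) * (1 - x) * x₁ = (n - 3) * x + 1) :
    x < ((n - 2) * R - 1) / ((n - 2) * R + (n - 3)) := by
  have hlt : (n - 3) * x + 1 < R * (n - 2) * (1 - x) :=
    h ▸ mul_lt_of_lt_one_right (mul_pos hRn (sub_pos.2 hx1)) hx₁1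
  rw [lt_div_iff₀ (by linarith)]
  linarith

end StarASIS

open StarASIS in
theorem star_ASIS_equilibrium_bound_general (n : ℕ) (hn : 4 ≤ n) (β γ x x₁ y : ℝ)
    (hx : x ∈ Set.Ioo (0 : ℝ) 1) (hx₁ : x₁ ∈ Set.Ioo (0 : ℝ) 1)
    (hy : y ∈ Set.Ioo (0 : ℝ) 1)
    (e2 : β / γ * (1 - x) * y * x₁ = x)
    (e3 : β / γ * ((n : ℝ) - 2) * (1 - y) * x₁ * y = y) :
    x₁ = γ / (β * ((n : ℝ) - 2)) * ((((n : ℝ) - 3) * x + 1) / (1 - x)) ∧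
      x < (((n : ℝ) - 2) * (β / γ) - 1) / (((n : ℝ) - 2) * (β / γ) + ((n : ℝ) - 3)) ∧
      (((n : ℝ) - 2) * (β / γ) - 1) / (((n : ℝ) - 2) * (β / γ) + ((n : ℝ) - 3)) < 1 := by
  obtain ⟨hx0, hx1⟩ := hx
  obtain ⟨hx₁0, hx₁1⟩ := hx₁
  have hn3 : (3 : ℝ) ≤ n := by exact_mod_cast (by omega : 3 ≤ n)
  have key := center_leaf_relation e2 (center_mul_edge_eq_one hy.1.ne' e3)
  have hRn := mul_sub_two_pos hn3 hx0.le hx1 hx₁0 key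
  refine ⟨?_, leaf_lt_of_center_lt_one hRn hn3 hx1 hx₁1 key, ?_⟩
  · simpa only [inv_div, div_div] using
      center_eq hx1.ne (leaf_affine_pos hn3 hx0.le).ne' key
  · rw [div_lt_one (by linarith)]
    linarith

/-- For the self-adaptive SIS model on the star `S_n` (`n ≥ 4`), any interior
equilibrium satisfies `x₁ = (γ/(β(n-2)))·((n-3)x+1)/(1-x)`, and hence
`x < ((n-2)R - 1)/((n-2)R + (n-3)) < 1` where `R = β/γ > 1/(n-2)`. -/
theorem star_ASIS_equilibrium_bound (n : ℕ) (hn : 4 ≤ n) (β γ x x₁ y : ℝ)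
    (hβ : 0 < β) (hγ : 0 < γ) (hR : β / γ > 1 / ((n : ℝ) - 2))
    (hx : x ∈ Set.Ioo (0 : ℝ) 1) (hx₁ : x₁ ∈ Set.Ioo (0 : ℝ) 1)
    (hy : y ∈ Set.Ioo (0 : ℝ) 1)
    (e1 : β / γ * ((n : ℝ) - 1) * (1 - x₁) * y * x = x₁)
    (e2 : β / γ * (1 - x) * y * x₁ = x)
    (e3 : β / γ * ((n : ℝ) - 2) * (1 - y) * x₁ * y = y) :
    x₁ = γ / (β * ((n : ℝ) - 2)) * ((((n : ℝ) - 3) * x + 1) / (1 - x)) ∧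
      x < (((n : ℝ) - 2) * (β / γ) - 1) / (((n : ℝ) - 2) * (β / γ) + ((n : ℝ) - 3)) ∧
      (((n : ℝ) - 2) * (β / γ) - 1) / (((n : ℝ) - 2) * (β / γ) + ((n : ℝ) - 3)) < 1 :=
  star_ASIS_equilibrium_bound_general n hn β γ x x₁ y hx hx₁ hy e2 e3
end

section
/- For the self-adaptive SIS model on the star graph S_n, eliminating x₁ and y from the equilibrium system shows that the leaf probability x satisfies the cubic equation (n-1)(n-2)R[(n-2)R + (n-3)]x³ + [(n-3)² + (n-1)(n-2)R - (n-1)(n-2)²R²]x² + 2(n-3)x + 1 = 0. -/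
/-- Eliminating `x₁` and `y` from the equilibrium system of the self-adaptive
SIS model on the star `S_n` shows that the leaf probability `x` satisfies the
cubic `(n-1)(n-2)R[(n-2)R+(n-3)]x³ + [(n-3)² + (n-1)(n-2)R - (n-1)(n-2)²R²]x²
+ 2(n-3)x + 1 = 0`. -/
theorem star_ASIS_cubic (n : ℕ) (hn : 4 ≤ n) (β γ x x₁ y : ℝ)
    (hβ : 0 < β) (hγ : 0 < γ)
    (hx : x ∈ Set.Ioo (0 : ℝ) 1) (hx₁ : x₁ ∈ Set.Ioo (0 : ℝ) 1)
    (hy : y ∈ Set.Ioo (0 : ℝ) 1)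
    (e1 : β / γ * ((n : ℝ) - 1) * (1 - x₁) * y * x = x₁)
    (e2 : β / γ * (1 - x) * y * x₁ = x)
    (e3 : β / γ * ((n : ℝ) - 2) * (1 - y) * x₁ * y = y) :
    let R : ℝ := β / γ
    ((n : ℝ) - 1) * ((n : ℝ) - 2) * R * (((n : ℝ) - 2) * R + ((n : ℝ) - 3)) * x ^ 3 +
      (((n : ℝ) - 3) ^ 2 + ((n : ℝ) - 1) * ((n : ℝ) - 2) * R -
        ((n : ℝ) - 1) * ((n : ℝ) - 2) ^ 2 * R ^ 2) * x ^ 2 +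
      2 * ((n : ℝ) - 3) * x + 1 = 0 := by
  intro R
  have hR : β / γ ≠ 0 := (div_pos hβ hγ).ne'
  -- divide e3 by y
  have e3' : β / γ * ((n : ℝ) - 2) * (1 - y) * x₁ = 1 := by
    have h : β / γ * ((n : ℝ) - 2) * (1 - y) * x₁ * y = 1 * y := by
      linear_combination e3
    exact mul_right_cancel₀ hy.1.ne' h
  -- factor relation from e2 and e3'
  have h0 : β / γ * x₁ * ((1 - x) * y - ((n : ℝ) - 2) * (1 - y) * x) = 0 := by
    linear_combination e2 - x * e3'
  have hfac : (1 - x) * y - ((n : ℝ) - 2) * (1 - y) * x = 0 :=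
    (mul_eq_zero.mp h0).resolve_left (mul_ne_zero hR hx₁.1.ne')
  have hy2 : y * (1 + ((n : ℝ) - 3) * x) = ((n : ℝ) - 2) * x := by
    linear_combination hfac
  have h4 : β / γ * ((n : ℝ) - 2) * x₁ * (1 - x) = 1 + ((n : ℝ) - 3) * x := by
    linear_combination (1 + ((n : ℝ) - 3) * x) * e3' +
      (β / γ * ((n : ℝ) - 2) * x₁) * hy2
  have h5 : β / γ * ((n : ℝ) - 1) * ((n : ℝ) - 2) * x ^ 2 * (1 - x₁) =
      x₁ * (1 + ((n : ℝ) - 3) * x) := by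
    linear_combination (1 + ((n : ℝ) - 3) * x) * e1 +
      (-(β / γ) * ((n : ℝ) - 1) * (1 - x₁) * x) * hy2
  show ((n : ℝ) - 1) * ((n : ℝ) - 2) * (β / γ) *
      (((n : ℝ) - 2) * (β / γ) + ((n : ℝ) - 3)) * x ^ 3 +
    (((n : ℝ) - 3) ^ 2 + ((n : ℝ) - 1) * ((n : ℝ) - 2) * (β / γ) -
      ((n : ℝ) - 1) * ((n : ℝ) - 2) ^ 2 * (β / γ) ^ 2) * x ^ 2 +
    2 * ((n : ℝ) - 3) * x + 1 = 0
  linear_combination (-(β / γ) * ((n : ℝ) - 2) * (1 - x)) * h5 -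
    (β / γ * ((n : ℝ) - 1) * ((n : ℝ) - 2) * x ^ 2 + (1 + ((n : ℝ) - 3) * x)) * h4
end
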